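/- arXiv:0805.3824 — 6 statements merged into one kernel-verified Lean document; each statement's English description precedes it below -/
import Mathlib

section
/- For any code 𝒞 ⊆ 𝒳 with at least two codewords for an adversarial channel with discrepancy function Δ, the correction capability satisfies τ(𝒞) ≥ ⌊(δ(𝒞) − 1)/2⌋. -/
/-!
Let `x ≠ x'` be codewords attaining `τ(𝒞)` and `y` an output attaining
`τ(x,x') + 1 = max {Δ(x,y), Δ(x',y)}`. Then
`δ(𝒞) ≤ δ(x,x') ≤ Δ(x,y) + Δ(x',y) ≤ 2 max {Δ(x,y), Δ(x',y)} = 2 (τ(𝒞) + 1)`,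
so `(δ(𝒞) − 1) / 2 ≤ τ(𝒞) + 1/2`, and the floor drops the `1/2`.
-/

/-- `τ(x,x') + 1 = min_y max {Δ(x,y), Δ(x',y)}`. -/
noncomputable def tauPairSucc {𝒳 𝒴 : Type*} (Δ : 𝒳 → 𝒴 → ℕ) (x x' : 𝒳) : ℕ :=
  sInf {e : ℕ | ∃ y : 𝒴, e = max (Δ x y) (Δ x' y)}

/-- `τ(𝒞) = (min over distinct pairs of codewords of (τ(x,x')+1)) − 1`,
as an integer; this is the minimum of `τ(x,x')` over distinct pairs. -/
noncomputable def tauCode {𝒳 𝒴 : Type*} (Δ : 𝒳 → 𝒴 → ℕ) (C : Set 𝒳) : ℤ :=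
  ((sInf {e : ℕ | ∃ x ∈ C, ∃ x' ∈ C, x ≠ x' ∧ e = tauPairSucc Δ x x'} : ℕ) : ℤ) - 1

/-- The Δ-distance `δ(x,x') = min_y (Δ(x,y) + Δ(x',y))`. -/
noncomputable def deltaPair {𝒳 𝒴 : Type*} (Δ : 𝒳 → 𝒴 → ℕ) (x x' : 𝒳) : ℕ :=
  sInf {e : ℕ | ∃ y : 𝒴, e = Δ x y + Δ x' y}

/-- `δ(𝒞)`: the minimum Δ-distance over pairs of distinct codewords. -/
noncomputable def deltaCode {𝒳 𝒴 : Type*} (Δ : 𝒳 → 𝒴 → ℕ) (C : Set 𝒳) : ℕ :=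
  sInf {e : ℕ | ∃ x ∈ C, ∃ x' ∈ C, x ≠ x' ∧ e = deltaPair Δ x x'}

section

variable {𝒳 𝒴 : Type*} (Δ : 𝒳 → 𝒴 → ℕ)

theorem deltaPair_le (x x' : 𝒳) (y : 𝒴) : deltaPair Δ x x' ≤ Δ x y + Δ x' y :=
  Nat.sInf_le ⟨y, rfl⟩

theorem exists_tauPairSucc_eq [Nonempty 𝒴] (x x' : 𝒳) :
    ∃ y : 𝒴, tauPairSucc Δ x x' = max (Δ x y) (Δ x' y) :=
  Nat.sInf_mem (s := {e : ℕ | ∃ y : 𝒴, e = max (Δ x y) (Δ x' y)})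
    ⟨_, Classical.arbitrary 𝒴, rfl⟩

theorem deltaPair_le_two_mul_tauPairSucc [Nonempty 𝒴] (x x' : 𝒳) :
    deltaPair Δ x x' ≤ 2 * tauPairSucc Δ x x' := by
  obtain ⟨y, hy⟩ := exists_tauPairSucc_eq Δ x x'
  have := deltaPair_le Δ x x' y
  omega

variable {C : Set 𝒳}

theorem exists_tauCode_add_one_eq (hC : ∃ x ∈ C, ∃ x' ∈ C, x ≠ x') :
    ∃ x ∈ C, ∃ x' ∈ C, x ≠ x' ∧ tauCode Δ C + 1 = tauPairSucc Δ x x' := by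
  obtain ⟨a, ha, b, hb, hab⟩ := hC
  obtain ⟨x, hx, x', hx', hne, he⟩ :=
    Nat.sInf_mem (s := {e : ℕ | ∃ x ∈ C, ∃ x' ∈ C, x ≠ x' ∧ e = tauPairSucc Δ x x'})
      ⟨_, a, ha, b, hb, hab, rfl⟩
  refine ⟨x, hx, x', hx', hne, ?_⟩
  rw [tauCode, he]
  ring

variable {Δ}

theorem deltaCode_le_deltaPair {x x' : 𝒳} (hx : x ∈ C) (hx' : x' ∈ C) (hne : x ≠ x') :
    deltaCode Δ C ≤ deltaPair Δ x x' :=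
  Nat.sInf_le ⟨x, hx, x', hx', hne, rfl⟩

end

theorem tauCode_ge_half_deltaCode_general {𝒳 𝒴 : Type*} [Nonempty 𝒴] (Δ : 𝒳 → 𝒴 → ℕ) (C : Set 𝒳)
    (hC : ∃ x ∈ C, ∃ x' ∈ C, x ≠ x') :
    tauCode Δ C ≥ ((deltaCode Δ C : ℤ) - 1) / 2 := by
  obtain ⟨x, hx, x', hx', hne, hτ⟩ := exists_tauCode_add_one_eq Δ hC
  have hδ : deltaCode Δ C ≤ 2 * tauPairSucc Δ x x' :=
    (deltaCode_le_deltaPair hx hx' hne).trans (deltaPair_le_two_mul_tauPairSucc Δ x x')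
  omega

/-- For any code with at least two codewords, `τ(𝒞) ≥ ⌊(δ(𝒞) − 1)/2⌋`. -/
theorem tauCode_ge_half_deltaCode {𝒳 𝒴 : Type*} [Fintype 𝒳] [Fintype 𝒴]
    [Nonempty 𝒳] [Nonempty 𝒴] (Δ : 𝒳 → 𝒴 → ℕ) (C : Set 𝒳)
    (hC : ∃ x ∈ C, ∃ x' ∈ C, x ≠ x') :
    tauCode Δ C ≥ ((deltaCode Δ C : ℤ) - 1) / 2 :=
  tauCode_ge_half_deltaCode_general Δ C hC
end

section
/- Let A ∈ 𝔽_q^{N×n} and let 𝒞 ⊆ 𝔽_q^{n×m} be a code with at least two codewords. Then 𝒞 is guaranteed to correct any t packet errors (i.e., 𝒞 is t-discrepancy-correcting for Δ_A) if and only if δ_A(𝒞) > 2t. -/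
/-- The coherent discrepancy `Δ_A(X,Y)`: the least `r` such that
`Y = AX + DZ` for some `D ∈ 𝔽_q^{N×r}` and `Z ∈ 𝔽_q^{r×m}`. -/
noncomputable def discA {K : Type*} [Field K] [Fintype K] {n m N : ℕ}
    (A : Matrix (Fin N) (Fin n) K) (X : Matrix (Fin n) (Fin m) K)
    (Y : Matrix (Fin N) (Fin m) K) : ℕ :=
  sInf {r : ℕ | ∃ D : Matrix (Fin N) (Fin r) K, ∃ Z : Matrix (Fin r) (Fin m) K,
    Y = A * X + D * Z}

/-- The Δ-distance `δ_A(X,X') = min_Y (Δ_A(X,Y) + Δ_A(X',Y))`. -/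
noncomputable def deltaA {K : Type*} [Field K] [Fintype K] {n m N : ℕ}
    (A : Matrix (Fin N) (Fin n) K) (X X' : Matrix (Fin n) (Fin m) K) : ℕ :=
  sInf {e : ℕ | ∃ Y : Matrix (Fin N) (Fin m) K, e = discA A X Y + discA A X' Y}

/-- `δ_A(𝒞)`: the minimum Δ-distance over pairs of distinct codewords. -/
noncomputable def deltaACode {K : Type*} [Field K] [Fintype K] {n m N : ℕ}
    (A : Matrix (Fin N) (Fin n) K) (C : Set (Matrix (Fin n) (Fin m) K)) : ℕ :=
  sInf {e : ℕ | ∃ X ∈ C, ∃ X' ∈ C, X ≠ X' ∧ e = deltaA A X X'}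

/-- A code `C` is `t`-discrepancy-correcting for a discrepancy function `Δ` if
no output is within discrepancy `t` of two distinct codewords. -/
def Correcting {α β : Type*} (Δ : α → β → ℕ) (C : Set α) (t : ℕ) : Prop :=
  ∀ x ∈ C, ∀ x' ∈ C, x ≠ x' → ∀ y : β, ¬(Δ x y ≤ t ∧ Δ x' y ≤ t)

/-!
If an output `Y` lies within `t` of two distinct codewords, then `δ_A(𝒞) ≤ 2t` directly from the
definitions. Conversely, let `Y` attain `δ_A(X, X') ≤ 2t` and suppose `a = Δ_A(X, Y) > t`. Write
`Y - AX = DZ` with `D` of width `a` and split `DZ` into a product of width `t` and one of width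
`a - t`; removing the second part from `Y` gives an output within `t` of `X` and within
`Δ_A(X', Y) + (a - t) ≤ t` of `X'`.
-/

namespace Matrix

variable {R : Type*} [Semiring R] {ι κ : Type*}

/-- Over a field, `M.FactorsThrough r` is equivalent to `M.rank ≤ r`. -/
def FactorsThrough (r : ℕ) (M : Matrix ι κ R) : Prop :=
  ∃ D : Matrix ι (Fin r) R, ∃ Z : Matrix (Fin r) κ R, M = D * Z

theorem factorsThrough_of_mul_eq {β : Type*} [Fintype β] {r : ℕ} (e : β ≃ Fin r)
    {M : Matrix ι κ R} {D : Matrix ι β R} {Z : Matrix β κ R} (h : M = D * Z) :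
    M.FactorsThrough r :=
  ⟨D.submatrix id e.symm, Z.submatrix e.symm id, by
    rw [submatrix_mul_equiv, submatrix_id_id, h]⟩

theorem factorsThrough_of_fintype_card [Fintype ι] [DecidableEq ι] (M : Matrix ι κ R) :
    M.FactorsThrough (Fintype.card ι) :=
  factorsThrough_of_mul_eq (Fintype.equivFin ι) (Matrix.one_mul M).symm

theorem FactorsThrough.add {r s : ℕ} {M M' : Matrix ι κ R} (hM : M.FactorsThrough r)
    (hM' : M'.FactorsThrough s) : (M + M').FactorsThrough (r + s) := by
  obtain ⟨D, Z, rfl⟩ := hM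
  obtain ⟨D', Z', rfl⟩ := hM'
  exact factorsThrough_of_mul_eq finSumFinEquiv (fromCols_mul_fromRows D D' Z Z').symm

theorem FactorsThrough.exists_add_of_le {a t : ℕ} {M : Matrix ι κ R} (hM : M.FactorsThrough a)
    (ht : t ≤ a) : ∃ M₁ M₂ : Matrix ι κ R,
      M = M₁ + M₂ ∧ M₁.FactorsThrough t ∧ M₂.FactorsThrough (a - t) := by
  obtain ⟨D, Z, rfl⟩ := hM
  let e : Fin t ⊕ Fin (a - t) ≃ Fin a := finSumFinEquiv.trans (finCongr (by omega))
  set D' := D.submatrix id e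
  set Z' := Z.submatrix e id
  refine ⟨D'.toCols₁ * Z'.toRows₁, D'.toCols₂ * Z'.toRows₂, ?_, ⟨_, _, rfl⟩, ⟨_, _, rfl⟩⟩
  rw [← fromCols_mul_fromRows, fromCols_toCols, fromRows_toRows, submatrix_mul_equiv,
    submatrix_id_id]

theorem FactorsThrough.neg {R : Type*} [Ring R] {r : ℕ} {M : Matrix ι κ R}
    (hM : M.FactorsThrough r) : (-M).FactorsThrough r := by
  obtain ⟨D, Z, rfl⟩ := hM
  exact ⟨-D, Z, (Matrix.neg_mul D Z).symm⟩

end Matrix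

open Matrix

section Discrepancy

variable {K : Type*} [Field K] [Fintype K] {n m N : ℕ} (A : Matrix (Fin N) (Fin n) K)

theorem discA_le_of_factorsThrough {X : Matrix (Fin n) (Fin m) K} {Y : Matrix (Fin N) (Fin m) K}
    {r : ℕ} (h : (Y - A * X).FactorsThrough r) : discA A X Y ≤ r := by
  obtain ⟨D, Z, hDZ⟩ := h
  exact Nat.sInf_le ⟨D, Z, sub_eq_iff_eq_add'.mp hDZ⟩

theorem factorsThrough_discA (X : Matrix (Fin n) (Fin m) K) (Y : Matrix (Fin N) (Fin m) K) :
    (Y - A * X).FactorsThrough (discA A X Y) := by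
  have hne : {r : ℕ | ∃ D : Matrix (Fin N) (Fin r) K, ∃ Z : Matrix (Fin r) (Fin m) K,
      Y = A * X + D * Z}.Nonempty := by
    obtain ⟨D, Z, hDZ⟩ := factorsThrough_of_fintype_card (Y - A * X)
    exact ⟨_, D, Z, sub_eq_iff_eq_add'.mp hDZ⟩
  obtain ⟨D, Z, hDZ⟩ := Nat.sInf_mem hne
  exact ⟨D, Z, sub_eq_iff_eq_add'.mpr hDZ⟩

theorem deltaA_le_discA_add_discA (X X' : Matrix (Fin n) (Fin m) K)
    (Y : Matrix (Fin N) (Fin m) K) : deltaA A X X' ≤ discA A X Y + discA A X' Y :=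
  Nat.sInf_le ⟨Y, rfl⟩

theorem exists_deltaA_eq_discA_add_discA (X X' : Matrix (Fin n) (Fin m) K) :
    ∃ Y : Matrix (Fin N) (Fin m) K, deltaA A X X' = discA A X Y + discA A X' Y :=
  Nat.sInf_mem (s := {e | ∃ Y, e = discA A X Y + discA A X' Y}) ⟨_, A * X, rfl⟩

theorem exists_discA_le_of_le_discA {X X' : Matrix (Fin n) (Fin m) K}
    {Y : Matrix (Fin N) (Fin m) K} {t : ℕ} (ht : t ≤ discA A X Y)
    (h : discA A X Y + discA A X' Y ≤ 2 * t) :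
    ∃ Y' : Matrix (Fin N) (Fin m) K, discA A X Y' ≤ t ∧ discA A X' Y' ≤ t := by
  obtain ⟨M₁, M₂, hsplit, hM₁, hM₂⟩ := (factorsThrough_discA A X Y).exists_add_of_le ht
  have hX : A * X + M₁ - A * X = M₁ := add_sub_cancel_left _ _
  have hX' : A * X + M₁ - A * X' = (Y - A * X') + -M₂ := by
    rw [sub_eq_iff_eq_add'.mp hsplit]; abel
  have hY'X' := discA_le_of_factorsThrough A
    (by rw [hX']; exact (factorsThrough_discA A X' Y).add hM₂.neg)
  exact ⟨A * X + M₁, discA_le_of_factorsThrough A (by rwa [hX]), by omega⟩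

theorem exists_discA_le_of_deltaA_le {X X' : Matrix (Fin n) (Fin m) K} {t : ℕ}
    (h : deltaA A X X' ≤ 2 * t) :
    ∃ Y : Matrix (Fin N) (Fin m) K, discA A X Y ≤ t ∧ discA A X' Y ≤ t := by
  obtain ⟨Y, hY⟩ := exists_deltaA_eq_discA_add_discA A X X'
  rw [hY] at h
  rcases le_or_gt t (discA A X Y) with hX | hX
  · exact exists_discA_le_of_le_discA A hX h
  rcases le_or_gt t (discA A X' Y) with hX' | hX'
  · obtain ⟨Y', h₁, h₂⟩ := exists_discA_le_of_le_discA A (X' := X) hX' (by omega)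
    exact ⟨Y', h₂, h₁⟩
  · exact ⟨Y, hX.le, hX'.le⟩

theorem deltaACode_le_deltaA {C : Set (Matrix (Fin n) (Fin m) K)} {X X' : Matrix (Fin n) (Fin m) K}
    (hX : X ∈ C) (hX' : X' ∈ C) (hne : X ≠ X') : deltaACode A C ≤ deltaA A X X' :=
  Nat.sInf_le ⟨X, hX, X', hX', hne, rfl⟩

theorem exists_deltaA_eq_deltaACode {C : Set (Matrix (Fin n) (Fin m) K)}
    (hC : ∃ X ∈ C, ∃ X' ∈ C, X ≠ X') :
    ∃ X ∈ C, ∃ X' ∈ C, X ≠ X' ∧ deltaACode A C = deltaA A X X' := by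
  obtain ⟨X, hX, X', hX', hne⟩ := hC
  exact Nat.sInf_mem (s := {e | ∃ X ∈ C, ∃ X' ∈ C, X ≠ X' ∧ e = deltaA A X X'})
    ⟨_, X, hX, X', hX', hne, rfl⟩

end Discrepancy

theorem correcting_iff_deltaACode_general {K : Type*} [Field K] [Fintype K] {n m N : ℕ}
    (A : Matrix (Fin N) (Fin n) K) (C : Set (Matrix (Fin n) (Fin m) K))
    (hC : ∃ X ∈ C, ∃ X' ∈ C, X ≠ X') (t : ℕ) :
    Correcting (discA A) C t ↔ 2 * t < deltaACode A C := by
  constructor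
  · intro hcorr
    by_contra! hle
    obtain ⟨X, hX, X', hX', hne, hd⟩ := exists_deltaA_eq_deltaACode A hC
    obtain ⟨Y, hY⟩ := exists_discA_le_of_deltaA_le A (hd ▸ hle)
    exact hcorr X hX X' hX' hne Y hY
  · rintro hlt X hX X' hX' hne Y ⟨hY, hY'⟩
    have := (deltaACode_le_deltaA A hX hX' hne).trans (deltaA_le_discA_add_discA A X X' Y)
    omega

/-- A code with at least two codewords corrects any `t` packet errors
(is `t`-discrepancy-correcting for `Δ_A`) if and only if `δ_A(𝒞) > 2t`. -/
theorem correcting_iff_deltaACode {K : Type*} [Field K] [Fintype K] {n m N : ℕ}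
    (hn : 0 < n) (hm : 0 < m) (hN : 0 < N)
    (A : Matrix (Fin N) (Fin n) K) (C : Set (Matrix (Fin n) (Fin m) K))
    (hC : ∃ X ∈ C, ∃ X' ∈ C, X ≠ X') (t : ℕ) :
    Correcting (discA A) C t ↔ 2 * t < deltaACode A C :=
  correcting_iff_deltaACode_general A C hC t
end

section
/- For any fixed A ∈ 𝔽_q^{N×n} and F ∈ 𝔽_q^{N×ℓ}, the discrepancy function Δ_{A,F} is normal: for all X₁, X₂ ∈ 𝔽_q^{n×m} such that δ_{A,F}(X₁,X₂) is finite, say equal to d, and every integer i with 0 ≤ i ≤ d, there exists Y ∈ 𝔽_q^{N×m} such that Δ_{A,F}(X₁,Y) = i and Δ_{A,F}(X₂,Y) = d − i. -/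
/-- `wt(E)`: the number of nonzero rows of a matrix `E`. -/
noncomputable def wtRows {K : Type*} [Field K] {a b : ℕ}
    (E : Matrix (Fin a) (Fin b) K) : ℕ :=
  {i : Fin a | E i ≠ 0}.ncard

/-- The discrepancy `Δ_{A,F}(X,Y) = min { wt(E) : Y = AX + FE } ∈ ℕ ∪ {∞}`
(the minimum over an empty set being `∞`). -/
noncomputable def discAF {K : Type*} [Field K] [Fintype K] {n m N l : ℕ}
    (A : Matrix (Fin N) (Fin n) K) (F : Matrix (Fin N) (Fin l) K)
    (X : Matrix (Fin n) (Fin m) K) (Y : Matrix (Fin N) (Fin m) K) : ℕ∞ :=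
  sInf {c : ℕ∞ | ∃ E : Matrix (Fin l) (Fin m) K, Y = A * X + F * E ∧ c = (wtRows E : ℕ∞)}

/-- The Δ-distance `δ_{A,F}(X₁,X₂) = min_Y (Δ_{A,F}(X₁,Y) + Δ_{A,F}(X₂,Y))`. -/
noncomputable def deltaAF {K : Type*} [Field K] [Fintype K] {n m N l : ℕ}
    (A : Matrix (Fin N) (Fin n) K) (F : Matrix (Fin N) (Fin l) K)
    (X₁ X₂ : Matrix (Fin n) (Fin m) K) : ℕ∞ :=
  sInf {c : ℕ∞ | ∃ Y : Matrix (Fin N) (Fin m) K, c = discAF A F X₁ Y + discAF A F X₂ Y}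

/-!
An optimal `Y` for `δ_{A,F}(X₁,X₂) = d` yields `E = E₁ - E₂` with `AX₂ = AX₁ + FE` and
exactly `d` nonzero rows: at most `d` by subadditivity of `wt`, at least `d` since `Y = AX₂`
is admissible. Splitting the nonzero rows of `E` into `i` rows `E'` and `d - i` rows `E - E'`,
the matrix `Y = AX₁ + FE' = AX₂ - F(E - E')` has `Δ(X₁,Y) ≤ i` and `Δ(X₂,Y) ≤ d - i`; both are
equalities because the two values add up to at least `d`.
-/

open Function

section RowWeight

variable {K : Type*} [Field K] {a b : ℕ}

lemma wtRows_eq_ncard_support (E : Matrix (Fin a) (Fin b) K) :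
    wtRows E = (support E).ncard :=
  rfl

lemma wtRows_zero : wtRows (0 : Matrix (Fin a) (Fin b) K) = 0 := by
  rw [wtRows_eq_ncard_support,
    show support (0 : Matrix (Fin a) (Fin b) K) = ∅ from support_zero, Set.ncard_empty]

lemma wtRows_neg (E : Matrix (Fin a) (Fin b) K) : wtRows (-E) = wtRows E := by
  rw [wtRows_eq_ncard_support, wtRows_eq_ncard_support, ← support_neg E]
  rfl

lemma wtRows_sub_le (E₁ E₂ : Matrix (Fin a) (Fin b) K) :
    wtRows (E₁ - E₂) ≤ wtRows E₁ + wtRows E₂ :=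
  (Set.ncard_le_ncard (support_sub E₁ E₂) (Set.toFinite _)).trans (Set.ncard_union_le _ _)

noncomputable def rowIndicator (s : Set (Fin a)) (E : Matrix (Fin a) (Fin b) K) :
    Matrix (Fin a) (Fin b) K :=
  s.indicator E

lemma rowIndicator_add_rowIndicator_compl (s : Set (Fin a)) (E : Matrix (Fin a) (Fin b) K) :
    rowIndicator s E + rowIndicator sᶜ E = E :=
  s.indicator_self_add_compl E

lemma wtRows_rowIndicator (s : Set (Fin a)) (E : Matrix (Fin a) (Fin b) K) :
    wtRows (rowIndicator s E) = (s ∩ support E).ncard :=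
  congrArg Set.ncard Set.support_indicator

lemma wtRows_rowIndicator_of_subset {s : Set (Fin a)} {E : Matrix (Fin a) (Fin b) K}
    (hs : s ⊆ support E) : wtRows (rowIndicator s E) = s.ncard := by
  rw [wtRows_rowIndicator, Set.inter_eq_left.mpr hs]

lemma wtRows_rowIndicator_compl_of_subset {s : Set (Fin a)} {E : Matrix (Fin a) (Fin b) K}
    (hs : s ⊆ support E) : wtRows (rowIndicator sᶜ E) = wtRows E - s.ncard := by
  rw [wtRows_rowIndicator, Set.inter_comm, ← Set.sdiff_eq, Set.ncard_sdiff hs,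
    wtRows_eq_ncard_support]

end RowWeight

lemma ENat.eq_and_eq_of_add_le {x y : ℕ∞} {i j : ℕ} (hx : x ≤ i) (hy : y ≤ j)
    (h : ((i + j : ℕ) : ℕ∞) ≤ x + y) : x = i ∧ y = j := by
  lift x to ℕ using ne_top_of_le_ne_top (natCast_ne_top i) hx
  lift y to ℕ using ne_top_of_le_ne_top (natCast_ne_top j) hy
  norm_cast at hx hy h ⊢
  omega

section Discrepancy

variable {K : Type*} [Field K] [Fintype K] {n m N l : ℕ}
  (A : Matrix (Fin N) (Fin n) K) (F : Matrix (Fin N) (Fin l) K)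

lemma discAF_le_wtRows (X : Matrix (Fin n) (Fin m) K) (E : Matrix (Fin l) (Fin m) K) :
    discAF A F X (A * X + F * E) ≤ wtRows E :=
  sInf_le ⟨E, rfl, rfl⟩

lemma exists_discAF_eq_wtRows {X : Matrix (Fin n) (Fin m) K} {Y : Matrix (Fin N) (Fin m) K}
    (h : discAF A F X Y ≠ ⊤) :
    ∃ E : Matrix (Fin l) (Fin m) K, Y = A * X + F * E ∧ discAF A F X Y = wtRows E := by
  have hne : {c : ℕ∞ | ∃ E : Matrix (Fin l) (Fin m) K,
      Y = A * X + F * E ∧ c = wtRows E}.Nonempty := by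
    by_contra hc
    exact h (by rw [discAF, Set.not_nonempty_iff_eq_empty.mp hc, sInf_empty])
  exact csInf_mem hne

lemma deltaAF_le_discAF_add (X₁ X₂ : Matrix (Fin n) (Fin m) K) (Y : Matrix (Fin N) (Fin m) K) :
    deltaAF A F X₁ X₂ ≤ discAF A F X₁ Y + discAF A F X₂ Y :=
  sInf_le ⟨Y, rfl⟩

lemma exists_deltaAF_eq_discAF_add (X₁ X₂ : Matrix (Fin n) (Fin m) K) :
    ∃ Y : Matrix (Fin N) (Fin m) K,
      deltaAF A F X₁ X₂ = discAF A F X₁ Y + discAF A F X₂ Y :=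
  csInf_mem (s := {c : ℕ∞ | ∃ Y : Matrix (Fin N) (Fin m) K,
    c = discAF A F X₁ Y + discAF A F X₂ Y}) ⟨_, 0, rfl⟩

lemma deltaAF_le_wtRows {X₁ X₂ : Matrix (Fin n) (Fin m) K} {E : Matrix (Fin l) (Fin m) K}
    (hE : A * X₂ = A * X₁ + F * E) : deltaAF A F X₁ X₂ ≤ wtRows E := by
  have h₁ : discAF A F X₁ (A * X₂) ≤ wtRows E := hE ▸ discAF_le_wtRows A F X₁ E
  have h₂ : discAF A F X₂ (A * X₂) ≤ 0 := by
    simpa [wtRows_zero] using discAF_le_wtRows A F X₂ 0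
  simpa using (deltaAF_le_discAF_add A F X₁ X₂ (A * X₂)).trans (add_le_add h₁ h₂)

lemma exists_wtRows_eq_of_deltaAF_eq {X₁ X₂ : Matrix (Fin n) (Fin m) K} {d : ℕ}
    (hd : deltaAF A F X₁ X₂ = d) :
    ∃ E : Matrix (Fin l) (Fin m) K, A * X₂ = A * X₁ + F * E ∧ wtRows E = d := by
  obtain ⟨Y, hY⟩ := exists_deltaAF_eq_discAF_add A F X₁ X₂
  rw [hd] at hY
  obtain ⟨E₁, hE₁, hw₁⟩ := exists_discAF_eq_wtRows A F (X := X₁) (Y := Y) fun h => by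
    simp [h] at hY
  obtain ⟨E₂, hE₂, hw₂⟩ := exists_discAF_eq_wtRows A F (X := X₂) (Y := Y) fun h => by
    simp [h] at hY
  have hE : A * X₂ = A * X₁ + F * (E₁ - E₂) := by
    rw [Matrix.mul_sub, ← add_sub_assoc, ← hE₁, hE₂, add_sub_cancel_right]
  have hsum : wtRows E₁ + wtRows E₂ = d := by
    rw [hw₁, hw₂] at hY
    exact_mod_cast hY.symm
  have hle : wtRows (E₁ - E₂) ≤ d := hsum ▸ wtRows_sub_le E₁ E₂
  have hge : d ≤ wtRows (E₁ - E₂) := by exact_mod_cast hd ▸ deltaAF_le_wtRows A F hE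
  exact ⟨E₁ - E₂, hE, le_antisymm hle hge⟩

end Discrepancy

theorem discAF_isNormal_general {K : Type*} [Field K] [Fintype K] {n m N l : ℕ}
    (A : Matrix (Fin N) (Fin n) K) (F : Matrix (Fin N) (Fin l) K)
    (X₁ X₂ : Matrix (Fin n) (Fin m) K) (d : ℕ)
    (hd : deltaAF A F X₁ X₂ = (d : ℕ∞)) (i : ℕ) (hi : i ≤ d) :
    ∃ Y : Matrix (Fin N) (Fin m) K,
      discAF A F X₁ Y = (i : ℕ∞) ∧ discAF A F X₂ Y = ((d - i : ℕ) : ℕ∞) := by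
  obtain ⟨E, hE, hwE⟩ := exists_wtRows_eq_of_deltaAF_eq A F hd
  obtain ⟨s, hs, hcard⟩ := Set.exists_subset_card_eq
    (by rwa [← wtRows_eq_ncard_support, hwE] : i ≤ (support E).ncard)
  have hY : A * X₁ + F * rowIndicator s E = A * X₂ + F * -rowIndicator sᶜ E := by
    rw [hE, Matrix.mul_neg, add_assoc, ← sub_eq_add_neg, ← Matrix.mul_sub,
      ← eq_sub_of_add_eq (rowIndicator_add_rowIndicator_compl s E)]
  have h₁ := discAF_le_wtRows A F X₁ (rowIndicator s E)
  have h₂ := discAF_le_wtRows A F X₂ (-rowIndicator sᶜ E)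
  rw [wtRows_rowIndicator_of_subset hs, hcard] at h₁
  rw [wtRows_neg, wtRows_rowIndicator_compl_of_subset hs, hwE, hcard, ← hY] at h₂
  have hsum := deltaAF_le_discAF_add A F X₁ X₂ (A * X₁ + F * rowIndicator s E)
  rw [hd, ← Nat.add_sub_of_le hi] at hsum
  exact ⟨_, ENat.eq_and_eq_of_add_le h₁ h₂ (by simpa using hsum)⟩

/-- The discrepancy function `Δ_{A,F}` is normal: if `δ_{A,F}(X₁,X₂)` is a
finite value `d`, then for every `0 ≤ i ≤ d` there is a `Y` with
`Δ_{A,F}(X₁,Y) = i` and `Δ_{A,F}(X₂,Y) = d − i`. -/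
theorem discAF_isNormal {K : Type*} [Field K] [Fintype K] {n m N l : ℕ}
    (hn : 0 < n) (hm : 0 < m) (hN : 0 < N) (hl : 0 < l)
    (A : Matrix (Fin N) (Fin n) K) (F : Matrix (Fin N) (Fin l) K)
    (X₁ X₂ : Matrix (Fin n) (Fin m) K) (d : ℕ)
    (hd : deltaAF A F X₁ X₂ = (d : ℕ∞)) (i : ℕ) (hi : i ≤ d) :
    ∃ Y : Matrix (Fin N) (Fin m) K,
      discAF A F X₁ Y = (i : ℕ∞) ∧ discAF A F X₂ Y = ((d - i : ℕ) : ℕ∞) :=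
  discAF_isNormal_general A F X₁ X₂ d hd i hi
end

section
/- Let m ≥ n and let 𝒞 ⊆ 𝔽_q^{n×m} be a maximum-rank-distance code, i.e., |𝒞| = q^{m(n − d_R(𝒞) + 1)}. Let A ∈ 𝔽_q^{N×n} have column-rank deficiency ρ = n − rank A. Then 𝒞 is guaranteed to correct t packet errors (i.e., 𝒞 is t-discrepancy-correcting for Δ_A) if and only if d_R(𝒞) > 2t + ρ. -/
/-- The minimum rank distance `d_R(𝒞)` over pairs of distinct codewords,
where `d_R(X,X') = rank (X' − X)`. -/
noncomputable def rankDistCode {K : Type*} [Field K] [Fintype K] {n m : ℕ}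
    (C : Set (Matrix (Fin n) (Fin m) K)) : ℕ :=
  sInf {e : ℕ | ∃ X ∈ C, ∃ X' ∈ C, X ≠ X' ∧ e = (X' - X).rank}

/-! By rank factorisation, `Δ_A(X, Y) = rank (Y - A X)`, and a matrix has rank at most `2t` iff it
is a sum of two matrices of rank at most `t`; so `𝒞` is `t`-discrepancy-correcting iff
`rank (A (X' - X)) > 2t` for all distinct codewords. Sylvester's inequality
`rank (A M) ≥ rank M - ρ` makes `d_R(𝒞) > 2t + ρ` sufficient. Conversely, factor `A = B R` with
`R` having `rank A` rows: `X ↦ R X` embeds `𝒞` into `𝔽_q^{rank A × m}` as a code of minimum rank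
distance `> 2t`, so the Singleton bound gives `|𝒞| ≤ q^{m (rank A - 2t)}`, which is smaller than
the MRD size `q^{m (n - d_R(𝒞) + 1)}` as soon as `d_R(𝒞) ≤ 2t + ρ`. -/

theorem Submodule.finrank_le_finrank_map_add_finrank_ker {K E F : Type*} [Field K]
    [AddCommGroup E] [Module K E] [FiniteDimensional K E] [AddCommGroup F] [Module K F]
    (V : Submodule K E) (f : E →ₗ[K] F) :
    Module.finrank K V ≤ Module.finrank K (V.map f) + Module.finrank K (LinearMap.ker f) := by
  have hV := LinearMap.finrank_range_add_finrank_ker (f.domRestrict V)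
  rw [LinearMap.range_domRestrict, LinearMap.ker_domRestrict,
    ← Submodule.finrank_map_subtype_eq, Submodule.map_comap_subtype] at hV
  have hker := Submodule.finrank_mono (inf_le_right : V ⊓ LinearMap.ker f ≤ _)
  omega

namespace Matrix

variable {K : Type*} [Field K] {l m n : Type*} [Fintype n]

theorem rank_neg (M : Matrix m n K) : (-M).rank = M.rank := by
  have : (-M).mulVecLin = -M.mulVecLin := by ext; simp
  rw [rank, this, LinearMap.range_neg, rank]

theorem rank_le_card_iff_exists_mul_eq {ι : Type*} [Fintype ι] [Finite m] (M : Matrix m n K) :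
    M.rank ≤ Fintype.card ι ↔ ∃ (D : Matrix m ι K) (Z : Matrix ι n K), M = D * Z := by
  classical
  refine ⟨fun h ↦ ?_, ?_⟩
  · set V := LinearMap.range M.mulVecLin
    obtain ⟨e⟩ : Nonempty (Fin (Module.finrank K V) ↪ ι) :=
      Function.Embedding.nonempty_of_card_le (by simpa [rank] using h)
    -- `s` maps `K^ι` onto the column space; `M` factors through it by projectivity of `K^n`.
    let s : (ι → K) →ₗ[K] V :=
      (Module.finBasis K V).equivFun.symm.toLinearMap ∘ₗ LinearMap.funLeft K K e
    have hs : Function.Surjective s :=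
      (Module.finBasis K V).equivFun.symm.surjective.comp
        (LinearMap.funLeft_surjective_of_injective K K _ e.injective)
    obtain ⟨g, hg⟩ := Module.projective_lifting_property s M.mulVecLin.rangeRestrict hs
    refine ⟨LinearMap.toMatrix' (V.subtype ∘ₗ s), LinearMap.toMatrix' g, ?_⟩
    rw [← LinearMap.toMatrix'_comp, LinearMap.comp_assoc, hg, LinearMap.subtype_comp_codRestrict,
      ← toLin'_apply', LinearMap.toMatrix'_toLin']
  · rintro ⟨D, Z, rfl⟩
    exact (rank_mul_le_left D Z).trans (rank_le_card_width D)

theorem rank_le_add_iff_exists_add_eq [Finite m] (M : Matrix m n K) (s t : ℕ) :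
    M.rank ≤ s + t ↔ ∃ P Q : Matrix m n K, M = P + Q ∧ P.rank ≤ s ∧ Q.rank ≤ t := by
  have hcard : Fintype.card (Fin s ⊕ Fin t) = s + t := by simp
  constructor
  · intro h
    obtain ⟨D, Z, rfl⟩ := (rank_le_card_iff_exists_mul_eq (ι := Fin s ⊕ Fin t) M).1 (hcard ▸ h)
    refine ⟨D.toCols₁ * Z.toRows₁, D.toCols₂ * Z.toRows₂, ?_, ?_, ?_⟩
    · rw [← fromCols_mul_fromRows, fromCols_toCols, fromRows_toRows]
    · simpa using (rank_le_card_iff_exists_mul_eq (ι := Fin s) _).2 ⟨_, _, rfl⟩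
    · simpa using (rank_le_card_iff_exists_mul_eq (ι := Fin t) _).2 ⟨_, _, rfl⟩
  · rintro ⟨P, Q, rfl, hP, hQ⟩
    obtain ⟨D₁, Z₁, rfl⟩ := (rank_le_card_iff_exists_mul_eq (ι := Fin s) P).1 (by simpa using hP)
    obtain ⟨D₂, Z₂, rfl⟩ := (rank_le_card_iff_exists_mul_eq (ι := Fin t) Q).1 (by simpa using hQ)
    rw [← fromCols_mul_fromRows, ← hcard]
    exact (rank_le_card_iff_exists_mul_eq _).2 ⟨_, _, rfl⟩

theorem rank_add_rank_le_card_add_rank_mul [Fintype m] (A : Matrix l n K) (M : Matrix n m K) :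
    A.rank + M.rank ≤ Fintype.card n + (A * M).rank := by
  have hM := (LinearMap.range M.mulVecLin).finrank_le_finrank_map_add_finrank_ker A.mulVecLin
  have hA := LinearMap.finrank_range_add_finrank_ker A.mulVecLin
  rw [← LinearMap.range_comp, ← mulVecLin_mul] at hM
  rw [Module.finrank_fintype_fun_eq_card] at hA
  rw [rank, rank, rank]
  omega

end Matrix

section RankMetric

variable {K : Type*} [Field K] [Fintype K]

theorem ncard_le_of_le_rank_sub {k m d : ℕ} (hd : 1 ≤ d) (C : Set (Matrix (Fin k) (Fin m) K))
    (hC : ∀ X ∈ C, ∀ X' ∈ C, X ≠ X' → d ≤ (X' - X).rank) :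
    C.ncard ≤ Fintype.card K ^ (m * (k + 1 - d)) := by
  have hs : k + 1 - d ≤ k := by omega
  let firstRows : Matrix (Fin k) (Fin m) K → Matrix (Fin (k + 1 - d)) (Fin m) K :=
    fun X ↦ X.submatrix (Fin.castLE hs) id
  -- Two codewords with the same first `k + 1 - d` rows differ by a matrix of rank `≤ d - 1`.
  have hinj : Set.InjOn firstRows C := by
    intro X hX X' hX' hXX'
    by_contra hne
    have hsupp : Function.support (X' - X).row ⊆ ↑(Finset.univ.map (Fin.castLEEmb hs))ᶜ := by
      intro i hi
      simp only [Finset.coe_compl, Finset.coe_map, Finset.coe_univ, Set.image_univ,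
        Set.mem_compl_iff, Set.mem_range]
      rintro ⟨j, rfl⟩
      refine hi (funext fun c ↦ ?_)
      have hrow : X (Fin.castLE hs j) c = X' (Fin.castLE hs j) c := congrFun (congrFun hXX' j) c
      simp [hrow]
    have hrank := (X' - X).rank_le_card_of_support_subset _ hsupp
    have hdist := hC X hX X' hX' hne
    simp only [Finset.card_compl, Finset.card_map, Finset.card_univ, Fintype.card_fin] at hrank
    omega
  calc C.ncard = (firstRows '' C).ncard := hinj.ncard_image.symm
    _ ≤ Nat.card (Matrix (Fin (k + 1 - d)) (Fin m) K) := Set.ncard_le_card _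
    _ = Fintype.card K ^ (m * (k + 1 - d)) := by simp [Matrix]; ring

theorem ncard_le_of_le_rank_mul_sub {k m N d : ℕ} (hd : 1 ≤ d) (A : Matrix (Fin N) (Fin k) K)
    (C : Set (Matrix (Fin k) (Fin m) K))
    (hC : ∀ X ∈ C, ∀ X' ∈ C, X ≠ X' → d ≤ (A * (X' - X)).rank) :
    C.ncard ≤ Fintype.card K ^ (m * (A.rank + 1 - d)) := by
  obtain ⟨B, R, hBR⟩ := (A.rank_le_card_iff_exists_mul_eq (ι := Fin A.rank)).1 (by simp)
  have hR : ∀ X ∈ C, ∀ X' ∈ C, X ≠ X' → d ≤ (R * X' - R * X).rank := fun X hX X' hX' hne ↦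
    calc d ≤ (B * (R * (X' - X))).rank := by
          rw [← Matrix.mul_assoc, ← hBR]; exact hC X hX X' hX' hne
      _ ≤ (R * X' - R * X).rank := by rw [Matrix.mul_sub]; exact Matrix.rank_mul_le_right _ _
  have hinj : Set.InjOn (R * ·) C := fun X hX X' hX' hRX ↦ by
    by_contra hne
    have := hR X hX X' hX' hne
    simp_all
  rw [← hinj.ncard_image]
  refine ncard_le_of_le_rank_sub hd _ ?_
  rintro _ ⟨X, hX, rfl⟩ _ ⟨X', hX', rfl⟩ hne
  exact hR X hX X' hX' fun h ↦ hne (h ▸ rfl)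

theorem discA_eq_rank_sub {n m N : ℕ} (A : Matrix (Fin N) (Fin n) K)
    (X : Matrix (Fin n) (Fin m) K) (Y : Matrix (Fin N) (Fin m) K) :
    discA A X Y = (Y - A * X).rank := by
  have : {r : ℕ | ∃ D : Matrix (Fin N) (Fin r) K, ∃ Z : Matrix (Fin r) (Fin m) K,
      Y = A * X + D * Z} = Set.Ici (Y - A * X).rank := by
    ext r
    simpa [eq_sub_iff_add_eq', eq_comm] using
      ((Y - A * X).rank_le_card_iff_exists_mul_eq (ι := Fin r)).symm
  rw [discA, this, csInf_Ici]

theorem correcting_discA_iff {n m N : ℕ} (A : Matrix (Fin N) (Fin n) K)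
    (C : Set (Matrix (Fin n) (Fin m) K)) (t : ℕ) :
    Correcting (discA A) C t ↔ ∀ X ∈ C, ∀ X' ∈ C, X ≠ X' → 2 * t < (A * (X' - X)).rank := by
  simp only [Correcting, discA_eq_rank_sub, two_mul]
  refine forall₄_congr fun X _ X' _ ↦ forall_congr' fun _ ↦ ?_
  rw [← not_le, (A * (X' - X)).rank_le_add_iff_exists_add_eq, ← not_exists, not_iff_not]
  constructor
  · rintro ⟨Y, hX, hX'⟩
    refine ⟨Y - A * X, -(Y - A * X'), by rw [Matrix.mul_sub]; abel, hX, by rwa [Matrix.rank_neg]⟩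
  · rintro ⟨P, Q, hPQ, hP, hQ⟩
    refine ⟨A * X + P, by simpa using hP, ?_⟩
    have hY : A * X + P - A * X' = -Q := by
      rw [Matrix.mul_sub, sub_eq_iff_eq_add] at hPQ
      rw [hPQ]; abel
    rwa [hY, Matrix.rank_neg]

end RankMetric

theorem mrd_correcting_iff_general {K : Type*} [Field K] [Fintype K] {n m N : ℕ}
    (hn : 0 < n) (hnm : n ≤ m)
    (A : Matrix (Fin N) (Fin n) K) (ρ : ℕ) (hρ : ρ = n - A.rank)
    (C : Set (Matrix (Fin n) (Fin m) K))
    (hMRD : C.ncard = Fintype.card K ^ (m * (n - rankDistCode C + 1)))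
    (t : ℕ) :
    Correcting (discA A) C t ↔ 2 * t + ρ < rankDistCode C := by
  have hA : A.rank ≤ n := A.rank_le_width
  rw [correcting_discA_iff]
  constructor
  · intro hcorr
    by_contra! hd
    have hbound := ncard_le_of_le_rank_mul_sub (Nat.le_add_left 1 (2 * t)) A C hcorr
    rw [hMRD, Nat.pow_le_pow_iff_right Fintype.one_lt_card,
      Nat.mul_le_mul_left_iff (by omega)] at hbound
    omega
  · intro hd X hX X' hX' hne
    have hdist : rankDistCode C ≤ (X' - X).rank := Nat.sInf_le ⟨X, hX, X', hX', hne, rfl⟩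
    have hsylvester := A.rank_add_rank_le_card_add_rank_mul (X' - X)
    rw [Fintype.card_fin] at hsylvester
    omega

/-- An MRD code `𝒞 ⊆ 𝔽_q^{n×m}` with `m ≥ n` (i.e. a code achieving the
Singleton bound `|𝒞| = q^{m(n − d_R(𝒞) + 1)}`) corrects `t` packet errors
under column-rank deficiency `ρ = n − rank A` if and only if
`d_R(𝒞) > 2t + ρ`. -/
theorem mrd_correcting_iff {K : Type*} [Field K] [Fintype K] {n m N : ℕ}
    (hn : 0 < n) (hN : 0 < N) (hnm : n ≤ m)
    (A : Matrix (Fin N) (Fin n) K) (ρ : ℕ) (hρ : ρ = n - A.rank)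
    (C : Set (Matrix (Fin n) (Fin m) K)) (hC : ∃ X ∈ C, ∃ X' ∈ C, X ≠ X')
    (hMRD : C.ncard = Fintype.card K ^ (m * (n - rankDistCode C + 1)))
    (t : ℕ) :
    Correcting (discA A) C t ↔ 2 * t + ρ < rankDistCode C :=
  mrd_correcting_iff_general hn hnm A ρ hρ C hMRD t
end

section
/- Let ρ ∈ ℕ with N ≥ max{n − ρ, N} (i.e., N ≥ n − ρ). Then for all X ∈ 𝔽_q^{n×m} and Y ∈ 𝔽_q^{N×m}, Δ_ρ(X,Y) = max{rank X − ρ, rank Y} − dim(⟨X⟩ ∩ ⟨Y⟩), where the subtraction is over the integers (the right-hand side is automatically nonnegative). -/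
/-- The noncoherent discrepancy
`Δ_ρ(X,Y) = min { rank (Y − AX) : A ∈ 𝔽_q^{N×n}, rank A ≥ n − ρ }`. -/
noncomputable def discRho {K : Type*} [Field K] [Fintype K] {n m N : ℕ}
    (ρ : ℕ) (X : Matrix (Fin n) (Fin m) K) (Y : Matrix (Fin N) (Fin m) K) : ℕ :=
  sInf {r : ℕ | ∃ A : Matrix (Fin N) (Fin n) K, n - ρ ≤ A.rank ∧ r = (Y - A * X).rank}

/-- The row space of a matrix: the span of its rows in `𝔽_q^m`. -/
noncomputable def rowSpace {K : Type*} [Field K] {a b : ℕ}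
    (X : Matrix (Fin a) (Fin b) K) : Submodule K (Fin b → K) :=
  Submodule.span K (Set.range fun i => X i)

/-!
Write `d = dim(⟨X⟩ ∩ ⟨Y⟩)`.

Lower bound: if `rank A ≥ n − ρ`, Sylvester's inequality gives `rank AX ≥ rank X − ρ`. Since
`⟨Y⟩ ⊆ ⟨Y − AX⟩ + ⟨AX⟩` and `⟨AX⟩ ⊆ ⟨Y − AX⟩ + ⟨Y⟩` with `⟨AX⟩ ⊆ ⟨X⟩`, both `rank Y` and
`rank AX` are at most `rank (Y − AX) + d`.

Upper bound: there is a linear map `f` fixing `⟨X⟩ ∩ ⟨Y⟩` pointwise and mapping `⟨Y⟩` into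
`⟨X⟩` with rank `min (rank X) (rank Y)`. The rows `f yᵢ`, perturbed inside `⟨X⟩` on redundant
rows until their span has dimension `rank X − ρ`, form a matrix `T` with `⟨T⟩ ⊆ ⟨X⟩` and
`rank (Y − T) + d ≤ max (rank X − ρ) (rank Y)`, because `id − f` kills `⟨X⟩ ∩ ⟨Y⟩`. Then
`T = AX`, and the rows of `A` can be perturbed inside the kernel of `v ↦ vX` until
`rank A ≥ n − ρ`; this is where `N ≥ n − ρ` is needed.
-/

open Module Submodule

section LinearAlgebra

variable {K V V' : Type*} [Field K] [AddCommGroup V] [Module K V] [AddCommGroup V'] [Module K V']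

theorem finrank_map_add_finrank_inf_ker [FiniteDimensional K V] (f : V →ₗ[K] V')
    (p : Submodule K V) :
    finrank K (p.map f) + finrank K ↥(p ⊓ LinearMap.ker f) = finrank K p := by
  have h := LinearMap.finrank_range_add_finrank_ker (f.domRestrict p)
  rwa [LinearMap.range_domRestrict, LinearMap.ker_domRestrict,
    ← finrank_map_subtype_eq, map_comap_subtype] at h

theorem finrank_le_finrank_add_finrank_inf [FiniteDimensional K V] {U R S : Submodule K V}
    (h : U ≤ R ⊔ S) : finrank K U ≤ finrank K R + finrank K ↥(U ⊓ S) := by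
  have hsup := finrank_sup_add_finrank_inf_eq U S
  have hle : finrank K ↥(U ⊔ S) ≤ finrank K R + finrank K S :=
    (finrank_mono (sup_le h le_sup_right)).trans (finrank_add_le_finrank_add_finrank R S)
  omega

theorem exists_linearMap_min_finrank_le_finrank_range {M M' : Type*} [AddCommGroup M]
    [Module K M] [AddCommGroup M'] [Module K M'] [FiniteDimensional K M]
    [FiniteDimensional K M'] :
    ∃ e : M →ₗ[K] M', min (finrank K M) (finrank K M') ≤ finrank K (LinearMap.range e) := by
  rcases le_total (finrank K M) (finrank K M') with h | h
  · obtain ⟨e, he⟩ := finrank_le_iff_exists_linearMap.mp h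
    exact ⟨e, by rw [LinearMap.finrank_range_of_inj he]; exact min_le_left _ _⟩
  · obtain ⟨g, hg⟩ := finrank_le_iff_exists_linearMap.mp h
    obtain ⟨e, he⟩ := g.exists_leftInverse_of_injective (LinearMap.ker_eq_bot.mpr hg)
    have htop : LinearMap.range e = ⊤ :=
      LinearMap.range_eq_top.mpr fun y => ⟨g y, LinearMap.congr_fun he y⟩
    exact ⟨e, by rw [htop, finrank_top]; exact min_le_right _ _⟩

theorem exists_linearMap_eqOn_inf_map_le [FiniteDimensional K V] (S S' : Submodule K V) :
    ∃ f : V →ₗ[K] V, (∀ w ∈ S ⊓ S', f w = w) ∧ S.map f ≤ S' ∧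
      min (finrank K S) (finrank K S') ≤ finrank K (S.map f) := by
  -- On `S = (S ⊓ S') ⊕ Z` take the identity on `S ⊓ S'` and a map of maximal rank from `Z`
  -- to a complement `C` of `S ⊓ S'` in `S'`; then extend to `V`.
  obtain ⟨Z, hZ⟩ := (S'.comap S.subtype).exists_isCompl
  obtain ⟨C, hC⟩ := (S.comap S'.subtype).exists_isCompl
  obtain ⟨e, he⟩ := exists_linearMap_min_finrank_le_finrank_range (K := K) (M := Z) (M' := C)
  let incl : S'.comap S.subtype →ₗ[K] S' :=
    (S.subtype ∘ₗ (S'.comap S.subtype).subtype).codRestrict S' fun w => w.2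
  let f₀ : S →ₗ[K] S' := LinearMap.ofIsCompl hZ incl (C.subtype ∘ₗ e)
  obtain ⟨f, hf⟩ := (S'.subtype ∘ₗ f₀).exists_extend
  have hmap : S.map f = (LinearMap.range f₀).map S'.subtype := by
    have hrange : S.map f = LinearMap.range (f ∘ₗ S.subtype) := by
      rw [LinearMap.range_comp, range_subtype]
    rw [hrange, hf, LinearMap.range_comp]
  refine ⟨f, fun w hw => ?_, hmap ▸ map_subtype_le _ _, ?_⟩
  · have hfw := LinearMap.congr_fun hf ⟨w, hw.1⟩
    simp only [LinearMap.comp_apply, subtype_apply] at hfw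
    rw [hfw]
    exact congrArg Subtype.val (LinearMap.ofIsCompl_apply_left hZ (u := ⟨⟨w, hw.1⟩, hw.2⟩))
  · have hincl : finrank K (LinearMap.range incl) = finrank K (S'.comap S.subtype) :=
      LinearMap.finrank_range_of_inj fun a b h =>
        Subtype.ext (Subtype.ext (congrArg Subtype.val h :))
    have hdisj : LinearMap.range incl ⊓ LinearMap.range (C.subtype ∘ₗ e) = ⊥ := by
      refine eq_bot_iff.mpr (le_trans (inf_le_inf ?_ ?_) hC.disjoint.le_bot)
      · rintro _ ⟨w, rfl⟩
        exact w.1.2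
      · rw [LinearMap.range_comp]
        exact map_subtype_le _ _
    have hsup := finrank_sup_add_finrank_inf_eq (LinearMap.range incl)
      (LinearMap.range (C.subtype ∘ₗ e))
    rw [hdisj, finrank_bot, LinearMap.range_comp, finrank_map_subtype_eq] at hsup
    have hS := finrank_add_eq_of_isCompl hZ
    have hS' := finrank_add_eq_of_isCompl hC
    have hW : finrank K (S'.comap S.subtype) = finrank K (S.comap S'.subtype) := by
      rw [← finrank_map_subtype_eq, map_comap_subtype, ← finrank_map_subtype_eq S',
        map_comap_subtype, inf_comm]
    rw [hmap, finrank_map_subtype_eq, LinearMap.range_ofIsCompl, LinearMap.range_comp]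
    omega

theorem exists_sup_span_singleton_le_span_add_single {ι : Type*} [Fintype ι] [DecidableEq ι]
    (t : ι → V) (h : finrank K (span K (Set.range t)) < Fintype.card ι) :
    ∃ i, ∀ v : V, span K (Set.range t) ⊔ K ∙ v ≤ span K (Set.range (t + Pi.single i v)) := by
  have hdep : ¬ LinearIndependent K t := fun hli => (finrank_span_eq_card hli ▸ h).false
  rw [linearIndependent_iff_notMem_span] at hdep
  push Not at hdep
  obtain ⟨i, hi⟩ := hdep
  refine ⟨i, fun v => ?_⟩
  have hoff : ∀ j ≠ i, t j ∈ span K (Set.range (t + Pi.single i v)) := fun j hj =>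
    subset_span ⟨j, by simp [hj]⟩
  have hti : t i ∈ span K (Set.range (t + Pi.single i v)) := by
    refine span_le.mpr ?_ hi
    rintro _ ⟨j, hj, rfl⟩
    exact hoff j (by simpa using hj)
  refine sup_le (span_le.mpr ?_) ((span_singleton_le_iff_mem _ _).mpr ?_)
  · rintro _ ⟨j, rfl⟩
    obtain rfl | hj := eq_or_ne j i
    exacts [hti, hoff j hj]
  · simpa using sub_mem (subset_span (Set.mem_range_self i)) hti

theorem exists_forall_mem_le_finrank_span_add [FiniteDimensional K V] {ι : Type*} [Fintype ι]
    (t : ι → V) (L : Submodule K V) {j : ℕ} (hι : j ≤ Fintype.card ι)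
    (hL : j ≤ finrank K ↥(span K (Set.range t) ⊔ L)) :
    ∃ p : ι → V, (∀ i, p i ∈ L) ∧
      finrank K (span K (Set.range p)) ≤ j - finrank K (span K (Set.range t)) ∧
      j ≤ finrank K (span K (Set.range (t + p))) := by
  classical
  induction j with
  | zero => exact ⟨0, fun _ => L.zero_mem, by simp, Nat.zero_le _⟩
  | succ j ih =>
    obtain ⟨p, hpL, hp, hj⟩ := ih (by omega) (by omega)
    by_cases hlt : j + 1 ≤ finrank K (span K (Set.range (t + p)))
    · exact ⟨p, hpL, by omega, hlt⟩
    have ht : span K (Set.range t) ≤ span K (Set.range (t + p)) ⊔ span K (Set.range p) :=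
      span_le.mpr <| Set.range_subset_iff.mpr fun i => by
        simpa using sub_mem (mem_sup_left (subset_span (Set.mem_range_self (f := t + p) i)))
          (mem_sup_right (subset_span (Set.mem_range_self (f := p) i)))
    have hdt := (finrank_mono ht).trans (finrank_add_le_finrank_add_finrank _ _)
    obtain ⟨v, hvL, hv⟩ : ∃ v ∈ L, v ∉ span K (Set.range (t + p)) := by
      by_contra! hL'
      have hpspan : span K (Set.range p) ≤ span K (Set.range (t + p)) :=
        span_le.mpr (Set.range_subset_iff.mpr fun i => hL' _ (hpL i))
      have := finrank_mono (sup_le (ht.trans (sup_le le_rfl hpspan)) hL')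
      omega
    have hv0 : v ≠ 0 := by
      rintro rfl
      exact hv (zero_mem _)
    obtain ⟨i, hi⟩ := exists_sup_span_singleton_le_span_add_single (K := K) (t + p) (by omega)
    have hsingle : ∀ l, (Pi.single i v : ι → V) l ∈ L ⊓ K ∙ v := fun l => by
      by_cases hl : l = i
      · subst hl
        simpa using mem_inf.mpr ⟨hvL, mem_span_singleton_self v⟩
      · simp [hl]
    refine ⟨p + Pi.single i v, fun l => add_mem (hpL l) (hsingle l).1, ?_, ?_⟩
    · have hle : span K (Set.range (p + Pi.single i v)) ≤ span K (Set.range p) ⊔ K ∙ v :=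
        span_le.mpr <| Set.range_subset_iff.mpr fun l =>
          add_mem (mem_sup_left (subset_span ⟨l, rfl⟩)) (mem_sup_right (hsingle l).2)
      have := (finrank_mono hle).trans (finrank_add_le_finrank_add_finrank _ _)
      rw [finrank_span_singleton hv0] at this
      omega
    · have := finrank_mono (hi v)
      rw [finrank_sup_span_singleton hv] at this
      rw [← add_assoc]
      omega

theorem exists_comp_eq_le_finrank_span [FiniteDimensional K V] {ι : Type*} [Fintype ι]
    (φ : V →ₗ[K] V') (t : ι → V') (ht : ∀ i, t i ∈ LinearMap.range φ) {j : ℕ}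
    (hι : j ≤ Fintype.card ι)
    (hj : j ≤ finrank K (span K (Set.range t)) + finrank K (LinearMap.ker φ)) :
    ∃ a : ι → V, φ ∘ a = t ∧ j ≤ finrank K (span K (Set.range a)) := by
  choose a₀ ha₀ using ht
  have hmap : (span K (Set.range a₀)).map φ = span K (Set.range t) := by
    rw [map_span, ← Set.range_comp]
    exact congrArg _ (congrArg Set.range (funext ha₀))
  have hsup := finrank_map_add_finrank_inf_ker φ (span K (Set.range a₀) ⊔ LinearMap.ker φ)
  rw [inf_eq_right.mpr le_sup_right] at hsup
  have hU : finrank K (span K (Set.range t)) ≤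
      finrank K ((span K (Set.range a₀) ⊔ LinearMap.ker φ).map φ) :=
    hmap ▸ finrank_mono (map_mono le_sup_left)
  obtain ⟨p, hpL, -, hp⟩ :=
    exists_forall_mem_le_finrank_span_add a₀ (LinearMap.ker φ) hι (by omega)
  refine ⟨a₀ + p, funext fun i => ?_, hp⟩
  simp [ha₀, LinearMap.mem_ker.mp (hpL i)]

theorem exists_forall_mem_finrank_span_sub_add_finrank_inf_le [FiniteDimensional K V]
    {ι : Type*} [Fintype ι] (S : Submodule K V) (y : ι → V) {k : ℕ} (hkS : k ≤ finrank K S)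
    (hkι : k ≤ Fintype.card ι) :
    ∃ t : ι → V, (∀ i, t i ∈ S) ∧ k ≤ finrank K (span K (Set.range t)) ∧
      finrank K (span K (Set.range (y - t))) + finrank K ↥(S ⊓ span K (Set.range y)) ≤
        max k (finrank K (span K (Set.range y))) := by
  set SY := span K (Set.range y)
  obtain ⟨f, hfix, hfS, hrank⟩ := exists_linearMap_eqOn_inf_map_le SY S
  have hspan : span K (Set.range (f ∘ y)) = SY.map f := by rw [map_span, Set.range_comp]
  obtain ⟨p, hpS, hp, hk⟩ := exists_forall_mem_le_finrank_span_add (f ∘ y) S hkι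
    (by rwa [hspan, sup_eq_right.mpr hfS])
  refine ⟨f ∘ y + p, fun i => add_mem (hfS (mem_map_of_mem (subset_span ⟨i, rfl⟩))) (hpS i),
    hk, ?_⟩
  set g := LinearMap.id - f
  have hle : span K (Set.range (y - (f ∘ y + p))) ≤ SY.map g ⊔ span K (Set.range p) :=
    span_le.mpr <| Set.range_subset_iff.mpr fun i => by
      have hi : (y - (f ∘ y + p)) i = g (y i) - p i := by
        simp only [g, Pi.sub_apply, Pi.add_apply, Function.comp_apply, LinearMap.sub_apply,
          LinearMap.id_apply]
        abel
      rw [hi]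
      exact sub_mem (mem_sup_left (mem_map_of_mem (subset_span ⟨i, rfl⟩)))
        (mem_sup_right (subset_span ⟨i, rfl⟩))
  have hg := finrank_map_add_finrank_inf_ker g SY
  have hW : finrank K ↥(S ⊓ SY) ≤ finrank K ↥(SY ⊓ LinearMap.ker g) :=
    finrank_mono fun w hw => ⟨hw.2, by simp [g, hfix w (inf_comm S SY ▸ hw)]⟩
  have hsub := (finrank_mono hle).trans (finrank_add_le_finrank_add_finrank _ _)
  have hWS : finrank K ↥(S ⊓ SY) ≤ finrank K SY := finrank_mono inf_le_right
  rw [hspan] at hp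
  omega

end LinearAlgebra

section Matrix

variable {K : Type*} [Field K]

theorem Matrix.rank_add_rank_le_rank_mul_add {l n o : Type*} [Fintype n] [Fintype o]
    (A : Matrix l n K) (B : Matrix n o K) :
    A.rank + B.rank ≤ (A * B).rank + Fintype.card n := by
  rw [Matrix.rank, Matrix.rank, Matrix.rank, Matrix.mulVecLin_mul, LinearMap.range_comp]
  have h1 := finrank_map_add_finrank_inf_ker A.mulVecLin (LinearMap.range B.mulVecLin)
  have h2 := LinearMap.finrank_range_add_finrank_ker A.mulVecLin
  have h3 := finrank_mono
    (inf_le_right : LinearMap.range B.mulVecLin ⊓ LinearMap.ker A.mulVecLin ≤ _)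
  rw [Module.finrank_fintype_fun_eq_card] at h2
  omega

variable {n m N : ℕ}

theorem rank_eq_finrank_rowSpace (X : Matrix (Fin n) (Fin m) K) :
    X.rank = finrank K (rowSpace X) :=
  X.rank_eq_finrank_span_row

theorem rowSpace_le_iff (X : Matrix (Fin n) (Fin m) K) {S : Submodule K (Fin m → K)} :
    rowSpace X ≤ S ↔ ∀ i, X i ∈ S :=
  span_le.trans Set.range_subset_iff

theorem row_mem_rowSpace (X : Matrix (Fin n) (Fin m) K) (i : Fin n) : X i ∈ rowSpace X :=
  subset_span ⟨i, rfl⟩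

theorem rowSpace_mul_le (A : Matrix (Fin N) (Fin n) K) (X : Matrix (Fin n) (Fin m) K) :
    rowSpace (A * X) ≤ rowSpace X :=
  (rowSpace_le_iff _).mpr fun i => by
    have h := LinearMap.mem_range_self X.vecMulLinear (A i)
    rwa [range_vecMulLinear] at h

theorem le_rank_sub_mul_add_finrank_inf {ρ : ℕ} (X : Matrix (Fin n) (Fin m) K)
    (Y : Matrix (Fin N) (Fin m) K) (A : Matrix (Fin N) (Fin n) K) (hA : n - ρ ≤ A.rank) :
    max (X.rank - ρ) Y.rank ≤ (Y - A * X).rank + finrank K ↥(rowSpace X ⊓ rowSpace Y) := by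
  have hsyl := Matrix.rank_add_rank_le_rank_mul_add A X
  have hAn := A.rank_le_width
  have hY := finrank_le_finrank_add_finrank_inf (U := rowSpace Y) (R := rowSpace (Y - A * X))
    (S := rowSpace (A * X)) <| (rowSpace_le_iff Y).mpr fun i => by
      rw [← sub_add_cancel (Y i) ((A * X) i)]
      exact add_mem (mem_sup_left (row_mem_rowSpace (Y - A * X) i))
        (mem_sup_right (row_mem_rowSpace (A * X) i))
  have hAX := finrank_le_finrank_add_finrank_inf (U := rowSpace (A * X))
    (R := rowSpace (Y - A * X)) (S := rowSpace Y) <| (rowSpace_le_iff (A * X)).mpr fun i => by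
      rw [← sub_sub_cancel (Y i) ((A * X) i)]
      exact sub_mem (mem_sup_right (row_mem_rowSpace Y i))
        (mem_sup_left (row_mem_rowSpace (Y - A * X) i))
  have hinf₁ : finrank K ↥(rowSpace Y ⊓ rowSpace (A * X)) ≤
      finrank K ↥(rowSpace X ⊓ rowSpace Y) :=
    finrank_mono (le_inf (inf_le_right.trans (rowSpace_mul_le A X)) inf_le_left)
  have hinf₂ : finrank K ↥(rowSpace (A * X) ⊓ rowSpace Y) ≤
      finrank K ↥(rowSpace X ⊓ rowSpace Y) :=
    finrank_mono (inf_le_inf_right _ (rowSpace_mul_le A X))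
  simp only [rank_eq_finrank_rowSpace, Fintype.card_fin] at *
  omega

theorem exists_rank_sub_mul_add_finrank_inf_le {ρ : ℕ} (hNρ : n - ρ ≤ N)
    (X : Matrix (Fin n) (Fin m) K) (Y : Matrix (Fin N) (Fin m) K) :
    ∃ A : Matrix (Fin N) (Fin n) K, n - ρ ≤ A.rank ∧
      (Y - A * X).rank + finrank K ↥(rowSpace X ⊓ rowSpace Y) ≤ max (X.rank - ρ) Y.rank := by
  have hXn := X.rank_le_height
  obtain ⟨t, htX, hkt, ht⟩ :=
    exists_forall_mem_finrank_span_sub_add_finrank_inf_le (rowSpace X) Y (k := X.rank - ρ)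
      (by rw [← rank_eq_finrank_rowSpace]; omega) (by simp only [Fintype.card_fin]; omega)
  have hker : X.rank + finrank K (LinearMap.ker X.vecMulLinear) = n := by
    rw [X.rank_eq_finrank_span_row, ← range_vecMulLinear,
      LinearMap.finrank_range_add_finrank_ker, Module.finrank_fin_fun]
  obtain ⟨a, ha, hka⟩ := exists_comp_eq_le_finrank_span X.vecMulLinear t
    (fun i => range_vecMulLinear X ▸ htX i) (j := n - ρ) (by simpa using hNρ) (by omega)
  refine ⟨Matrix.of a, (Matrix.of a).rank_eq_finrank_span_row ▸ hka, ?_⟩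
  have haX : Matrix.of a * X = Matrix.of t := funext fun i => congr_fun ha i
  rw [haX, (Y - Matrix.of t).rank_eq_finrank_span_row, Y.rank_eq_finrank_span_row]
  exact ht

end Matrix

theorem discRho_eq_max_sub {K : Type*} [Field K] [Fintype K] {n m N : ℕ} (ρ : ℕ)
    (hNρ : n - ρ ≤ N) (X : Matrix (Fin n) (Fin m) K) (Y : Matrix (Fin N) (Fin m) K) :
    discRho ρ X Y = max (X.rank - ρ) Y.rank - finrank K ↥(rowSpace X ⊓ rowSpace Y) := by
  obtain ⟨A, hA, hAY⟩ := exists_rank_sub_mul_add_finrank_inf_le hNρ X Y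
  refine IsLeast.csInf_eq ⟨⟨A, hA, ?_⟩, ?_⟩
  · have := le_rank_sub_mul_add_finrank_inf X Y A hA
    omega
  · rintro _ ⟨B, hB, rfl⟩
    have := le_rank_sub_mul_add_finrank_inf X Y B hB
    omega

theorem discRho_eq_general {K : Type*} [Field K] [Fintype K] {n m N : ℕ}
    (ρ : ℕ) (hNρ : n - ρ ≤ N)
    (X : Matrix (Fin n) (Fin m) K) (Y : Matrix (Fin N) (Fin m) K) :
    (discRho ρ X Y : ℤ) =
      max ((X.rank : ℤ) - ρ) (Y.rank : ℤ)
        - (Module.finrank K ↥(rowSpace X ⊓ rowSpace Y) : ℤ) := by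
  have hd : finrank K ↥(rowSpace X ⊓ rowSpace Y) ≤ Y.rank :=
    rank_eq_finrank_rowSpace Y ▸ finrank_mono inf_le_right
  rw [discRho_eq_max_sub ρ hNρ]
  omega

/-- For `N ≥ n − ρ`,
`Δ_ρ(X,Y) = max {rank X − ρ, rank Y} − dim(⟨X⟩ ∩ ⟨Y⟩)`, the subtraction being
over the integers (the right-hand side is automatically nonnegative). -/
theorem discRho_eq {K : Type*} [Field K] [Fintype K] {n m N : ℕ}
    (hn : 0 < n) (hm : 0 < m) (hN : 0 < N) (ρ : ℕ) (hNρ : n - ρ ≤ N)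
    (X : Matrix (Fin n) (Fin m) K) (Y : Matrix (Fin N) (Fin m) K) :
    (discRho ρ X Y : ℤ) =
      max ((X.rank : ℤ) - ρ) (Y.rank : ℤ)
        - (Module.finrank K ↥(rowSpace X ⊓ rowSpace Y) : ℤ) :=
  discRho_eq_general ρ hNρ X Y
end

section
/- The injection distance d_I(U,V) = max{dim U, dim V} − dim(U ∩ V) is a metric on the set of all subspaces of 𝔽_q^m: it is nonnegative, symmetric, satisfies d_I(U,V) = 0 if and only if U = V, and satisfies the triangle inequality d_I(U,W) ≤ d_I(U,V) + d_I(V,W) for all subspaces U, V, W of 𝔽_q^m. -/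
/-- The injection distance between two subspaces of `𝔽_q^m`:
`d_I(U,V) = max {dim U, dim V} − dim (U ∩ V)`. -/
noncomputable def injDist {K : Type*} [Field K] {m : ℕ}
    (U V : Submodule K (Fin m → K)) : ℕ :=
  max (Module.finrank K U) (Module.finrank K V) - Module.finrank K ↥(U ⊓ V)

/-!
Writing `d_I(U,V) = max (dim U − dim (U ∩ V)) (dim V − dim (U ∩ V))`, the triangle inequality
reduces to `dim (U ∩ V) + dim (V ∩ W) ≤ dim V + dim (U ∩ W)`. This is Grassmann's formula for
the subspaces `U ∩ V` and `V ∩ W` of `V`, whose intersection lies in `U ∩ W`.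
-/

open Module

namespace Submodule

variable {K E : Type*} [DivisionRing K] [AddCommGroup E] [Module K E] [FiniteDimensional K E]

theorem finrank_inf_add_finrank_inf_le (U V W : Submodule K E) :
    finrank K ↥(U ⊓ V) + finrank K ↥(V ⊓ W) ≤ finrank K V + finrank K ↥(U ⊓ W) := by
  have grassmann := finrank_sup_add_finrank_inf_eq (U ⊓ V) (V ⊓ W)
  have hsup : finrank K ↥(U ⊓ V ⊔ V ⊓ W) ≤ finrank K V :=
    finrank_mono (sup_le inf_le_right inf_le_left)
  have hinf : finrank K ↥(U ⊓ V ⊓ (V ⊓ W)) ≤ finrank K ↥(U ⊓ W) :=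
    finrank_mono (le_inf (inf_le_left.trans inf_le_left) (inf_le_right.trans inf_le_right))
  omega

end Submodule

section InjDist

open Submodule

variable {K : Type*} [Field K] {m : ℕ}

theorem injDist_comm (U V : Submodule K (Fin m → K)) : injDist U V = injDist V U := by
  rw [injDist, injDist, max_comm, inf_comm]

theorem injDist_eq_zero_iff {U V : Submodule K (Fin m → K)} : injDist U V = 0 ↔ U = V := by
  refine ⟨fun h => ?_, fun h => by rw [h, injDist, inf_idem, max_self, Nat.sub_self]⟩
  rw [injDist, Nat.sub_eq_zero_iff_le, max_le_iff] at h
  have hU : U ⊓ V = U := eq_of_le_of_finrank_le inf_le_left h.1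
  have hV : U ⊓ V = V := eq_of_le_of_finrank_le inf_le_right h.2
  exact hU.symm.trans hV

theorem injDist_triangle (U V W : Submodule K (Fin m → K)) :
    injDist U W ≤ injDist U V + injDist V W := by
  have key := finrank_inf_add_finrank_inf_le U V W
  have hUV := finrank_mono (inf_le_left : U ⊓ V ≤ U)
  have hVU := finrank_mono (inf_le_right : U ⊓ V ≤ V)
  have hVW := finrank_mono (inf_le_left : V ⊓ W ≤ V)
  have hWV := finrank_mono (inf_le_right : V ⊓ W ≤ W)
  simp only [injDist]
  omega

end InjDist

theorem injDist_is_metric_general {K : Type*} [Field K] {m : ℕ} :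
    ∀ U V W : Submodule K (Fin m → K),
      0 ≤ injDist U V ∧
      injDist U V = injDist V U ∧
      (injDist U V = 0 ↔ U = V) ∧
      injDist U W ≤ injDist U V + injDist V W :=
  fun U V W => ⟨Nat.zero_le _, injDist_comm U V, injDist_eq_zero_iff, injDist_triangle U V W⟩

/-- The injection distance is a metric on the set of subspaces of `𝔽_q^m`:
nonnegative, symmetric, zero exactly on the diagonal, and satisfying the
triangle inequality. -/
theorem injDist_is_metric {K : Type*} [Field K] [Fintype K] {m : ℕ} (hm : 0 < m) :
    ∀ U V W : Submodule K (Fin m → K),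
      0 ≤ injDist U V ∧
      injDist U V = injDist V U ∧
      (injDist U V = 0 ↔ U = V) ∧
      injDist U W ≤ injDist U V + injDist V W :=
  injDist_is_metric_general
end
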